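/- arXiv:1505.04899 — 5 statements merged into one kernel-verified Lean document; each statement's English description precedes it below -/
import Mathlib

section
/- For p > 1 and α > 1 - 1/p with α ≠ 1, define Q_α = α^p / (p(α-1)+1). Then Q_α > 1, the map α ↦ Q_α is strictly decreasing on (1-1/p, 1) and strictly increasing on (1, ∞), and Q_α → ∞ both as α → (1-1/p)+ and as α → ∞. Consequently, for every Q > 1 there exist exactly two exponents 1-1/p < α' < 1 < α with Q = Q_α = Q_{α'}. -/
/-!
Write `Q_α = α^p / (p(α-1)+1)`. Bernoulli's inequality `α^p > 1 + p(α-1)` gives `Q_α > 1`,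
and `dQ_α/dα = p(p-1) α^(p-1) (α-1) / (p(α-1)+1)^2` has the sign of `α - 1`. The denominator
vanishes exactly at `α = 1 - 1/p` while the numerator stays positive, and `Q_α ≥ α^(p-1)/p` for
`α ≥ 1`, which gives the two limits. By the intermediate value theorem each branch then takes
every value above `Q_1 = 1`, exactly once by strict monotonicity.
-/

open Filter Set Topology

noncomputable def quasiminConst (p α : ℝ) : ℝ := α ^ p / (p * (α - 1) + 1)

theorem Set.InjOn.existsUnique_of_mem_image {X Y : Type*} {f : X → Y} {s : Set X}
    (hf : InjOn f s) {y : Y} (hy : y ∈ f '' s) : ∃! x, x ∈ s ∧ y = f x := by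
  obtain ⟨x, hxs, rfl⟩ := hy
  exact ⟨x, ⟨hxs, rfl⟩, fun x' hx' => hf hx'.1 hxs hx'.2.symm⟩

section

variable {p α : ℝ}

theorem one_sub_one_div_pos (hp : 1 < p) : 0 < 1 - 1 / p :=
  sub_pos.2 <| (div_lt_one (zero_lt_one.trans hp)).2 hp

theorem one_sub_one_div_lt_one (hp : 0 < p) : 1 - 1 / p < 1 :=
  sub_lt_self 1 (one_div_pos.2 hp)

theorem mul_sub_one_add_one_eq (hp : p ≠ 0) : p * (α - 1) + 1 = p * (α - (1 - 1 / p)) := by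
  field_simp
  ring

theorem mul_sub_one_add_one_pos (hp : 0 < p) (hα : 1 - 1 / p < α) : 0 < p * (α - 1) + 1 := by
  rw [mul_sub_one_add_one_eq hp.ne']
  exact mul_pos hp (sub_pos.2 hα)

theorem pos_of_one_sub_one_div_lt (hp : 1 < p) (hα : 1 - 1 / p < α) : 0 < α :=
  (one_sub_one_div_pos hp).trans hα

theorem Ioi_one_subset_Ioi_one_sub_one_div (hp : 0 < p) : Ioi 1 ⊆ Ioi (1 - 1 / p) :=
  Ioi_subset_Ioi (one_sub_one_div_lt_one hp).le

theorem quasiminConst_one : quasiminConst p 1 = 1 := by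
  simp [quasiminConst]

theorem one_lt_quasiminConst (hp : 1 < p) (hα : 1 - 1 / p < α) (hα1 : α ≠ 1) :
    1 < quasiminConst p α := by
  rw [quasiminConst, one_lt_div (mul_sub_one_add_one_pos (by linarith) hα)]
  have hbernoulli := one_add_mul_self_lt_rpow_one_add
    (by linarith [pos_of_one_sub_one_div_lt hp hα] : -1 ≤ α - 1) (sub_ne_zero.2 hα1) hp
  rw [add_sub_cancel] at hbernoulli
  linarith

end

namespace quasiminConst

variable {p α : ℝ}

theorem hasDerivAt (hα : 0 < α) (hden : p * (α - 1) + 1 ≠ 0) :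
    HasDerivAt (quasiminConst p)
      (p * (p - 1) * α ^ (p - 1) / (p * (α - 1) + 1) ^ 2 * (α - 1)) α := by
  have hnum : HasDerivAt (fun α : ℝ => α ^ p) (p * α ^ (p - 1)) α := by
    simpa using Real.hasDerivAt_rpow_const (p := p) (Or.inl hα.ne')
  have hlin : HasDerivAt (fun α : ℝ => p * (α - 1) + 1) p α := by
    simpa using (((hasDerivAt_id α).sub_const 1).const_mul p).add_const 1
  refine (hnum.div hlin hden).congr_deriv ?_
  rw [Real.rpow_sub_one hα.ne']
  field_simp
  ring

theorem hasDerivAt_of_one_sub_one_div_lt (hp : 1 < p) (hα : 1 - 1 / p < α) :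
    HasDerivAt (quasiminConst p)
      (p * (p - 1) * α ^ (p - 1) / (p * (α - 1) + 1) ^ 2 * (α - 1)) α :=
  hasDerivAt (pos_of_one_sub_one_div_lt hp hα) (mul_sub_one_add_one_pos (by linarith) hα).ne'

theorem deriv_factor_pos (hp : 1 < p) (hα : 1 - 1 / p < α) :
    0 < p * (p - 1) * α ^ (p - 1) / (p * (α - 1) + 1) ^ 2 := by
  have hpow := Real.rpow_pos_of_pos (pos_of_one_sub_one_div_lt hp hα) (p - 1)
  have hden := mul_sub_one_add_one_pos (by linarith) hα
  have hp1 : 0 < p - 1 := sub_pos.2 hp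
  positivity

theorem continuousOn (hp : 1 < p) : ContinuousOn (quasiminConst p) (Ioi (1 - 1 / p)) :=
  fun _ hα => (hasDerivAt_of_one_sub_one_div_lt hp hα).continuousAt.continuousWithinAt

theorem strictAntiOn (hp : 1 < p) : StrictAntiOn (quasiminConst p) (Ioo (1 - 1 / p) 1) := by
  refine strictAntiOn_of_deriv_neg (convex_Ioo _ _)
    ((continuousOn hp).mono Ioo_subset_Ioi_self) fun α hα => ?_
  rw [interior_Ioo] at hα
  rw [(hasDerivAt_of_one_sub_one_div_lt hp hα.1).deriv]
  exact mul_neg_of_pos_of_neg (deriv_factor_pos hp hα.1) (sub_neg.2 hα.2)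

theorem strictMonoOn (hp : 1 < p) : StrictMonoOn (quasiminConst p) (Ioi 1) := by
  have hsub := Ioi_one_subset_Ioi_one_sub_one_div (zero_lt_one.trans hp)
  refine strictMonoOn_of_deriv_pos (convex_Ioi _) ((continuousOn hp).mono hsub) fun α hα => ?_
  rw [interior_Ioi] at hα
  rw [(hasDerivAt_of_one_sub_one_div_lt hp (hsub hα)).deriv]
  exact mul_pos (deriv_factor_pos hp (hsub hα)) (sub_pos.2 hα)

theorem tendsto_nhdsGT (hp : 1 < p) :
    Tendsto (quasiminConst p) (𝓝[>] (1 - 1 / p)) atTop := by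
  have hp0 : 0 < p := zero_lt_one.trans hp
  have hnum : Tendsto (fun α : ℝ => α ^ p) (𝓝[>] (1 - 1 / p)) (𝓝 ((1 - 1 / p) ^ p)) :=
    (Real.continuousAt_rpow_const _ _ (Or.inl (one_sub_one_div_pos hp).ne')).continuousWithinAt
  have hden : Tendsto (fun α : ℝ => p * (α - 1) + 1) (𝓝[>] (1 - 1 / p)) (𝓝[>] 0) := by
    refine tendsto_nhdsWithin_of_tendsto_nhds_of_eventually_within _ ?_ ?_
    · simp_rw [mul_sub_one_add_one_eq hp0.ne']
      refine Tendsto.mono_left ?_ nhdsWithin_le_nhds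
      simpa using (Continuous.tendsto (f := fun α : ℝ => p * (α - (1 - 1 / p)))
        (by fun_prop) (1 - 1 / p))
    · filter_upwards [self_mem_nhdsWithin] with α hα using mul_sub_one_add_one_pos hp0 hα
  refine (hden.inv_tendsto_nhdsGT_zero.atTop_mul_pos
    (Real.rpow_pos_of_pos (one_sub_one_div_pos hp) p) hnum).congr fun α => ?_
  simp [quasiminConst, div_eq_mul_inv, mul_comm]

theorem tendsto_atTop (hp : 1 < p) : Tendsto (quasiminConst p) atTop atTop := by
  have hp0 : 0 < p := zero_lt_one.trans hp
  refine tendsto_atTop_mono' _ ?_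
    ((tendsto_rpow_atTop (sub_pos.2 hp)).atTop_div_const hp0)
  filter_upwards [eventually_ge_atTop 1] with α hα
  have hα0 : 0 < α := zero_lt_one.trans_le hα
  calc α ^ (p - 1) / p = α ^ p / (p * α) := by
        rw [Real.rpow_sub_one hα0.ne']
        field_simp
    _ ≤ quasiminConst p α :=
        div_le_div_of_nonneg_left (Real.rpow_nonneg hα0.le p)
          (mul_sub_one_add_one_pos hp0 ((one_sub_one_div_lt_one hp0).trans_le hα))
          (by nlinarith)

theorem Ioi_one_subset_image_Ioo (hp : 1 < p) :
    Ioi 1 ⊆ quasiminConst p '' Ioo (1 - 1 / p) 1 := by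
  have hlt := one_sub_one_div_lt_one (zero_lt_one.trans hp)
  have hright : Tendsto (quasiminConst p) (𝓝[<] 1) (𝓝 1) := by
    simpa only [quasiminConst_one] using ((continuousOn hp).continuousAt
      (Ioi_mem_nhds hlt)).continuousWithinAt.tendsto (s := Iio 1)
  exact isPreconnected_Ioo.intermediate_value_Ioi
    (le_principal_iff.2 (Ioo_mem_nhdsLT hlt)) (le_principal_iff.2 (Ioo_mem_nhdsGT hlt))
    ((continuousOn hp).mono Ioo_subset_Ioi_self) hright (tendsto_nhdsGT hp)

theorem Ioi_one_subset_image_Ioi (hp : 1 < p) : Ioi 1 ⊆ quasiminConst p '' Ioi 1 := by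
  have hp0 : 0 < p := zero_lt_one.trans hp
  have hleft : Tendsto (quasiminConst p) (𝓝[>] 1) (𝓝 1) := by
    simpa only [quasiminConst_one] using ((continuousOn hp).continuousAt
      (Ioi_mem_nhds (one_sub_one_div_lt_one hp0))).continuousWithinAt.tendsto (s := Ioi 1)
  exact isPreconnected_Ioi.intermediate_value_Ioi (l₁ := 𝓝[>] 1) inf_le_right
    (le_principal_iff.2 (Ioi_mem_atTop 1))
    ((continuousOn hp).mono (Ioi_one_subset_Ioi_one_sub_one_div hp0)) hleft (tendsto_atTop hp)

end quasiminConst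

theorem stmt_5 (p : ℝ) (hp : 1 < p) :
    (∀ α, 1 - 1/p < α → α ≠ 1 → 1 < α ^ p / (p * (α - 1) + 1)) ∧
    StrictAntiOn (fun α : ℝ => α ^ p / (p * (α - 1) + 1)) (Set.Ioo (1 - 1/p) 1) ∧
    StrictMonoOn (fun α : ℝ => α ^ p / (p * (α - 1) + 1)) (Set.Ioi 1) ∧
    Tendsto (fun α : ℝ => α ^ p / (p * (α - 1) + 1))
      (nhdsWithin (1 - 1/p) (Set.Ioi (1 - 1/p))) atTop ∧
    Tendsto (fun α : ℝ => α ^ p / (p * (α - 1) + 1)) atTop atTop ∧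
    ∀ Q : ℝ, 1 < Q →
      (∃! α' : ℝ, α' ∈ Set.Ioo (1 - 1/p) 1 ∧ Q = α' ^ p / (p * (α' - 1) + 1)) ∧
      (∃! α : ℝ, α ∈ Set.Ioi 1 ∧ Q = α ^ p / (p * (α - 1) + 1)) :=
  ⟨fun _ => one_lt_quasiminConst hp, quasiminConst.strictAntiOn hp,
    quasiminConst.strictMonoOn hp, quasiminConst.tendsto_nhdsGT hp,
    quasiminConst.tendsto_atTop hp, fun _ hQ =>
      ⟨(quasiminConst.strictAntiOn hp).injOn.existsUnique_of_mem_image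
          (quasiminConst.Ioi_one_subset_image_Ioo hp hQ),
        (quasiminConst.strictMonoOn hp).injOn.existsUnique_of_mem_image
          (quasiminConst.Ioi_one_subset_image_Ioi hp hQ)⟩⟩
end

section
/- Let p > 1 and let 1 - 1/p < α2 < 1 < α1. Define w(x) = (1 - (1-x)^{α2}) - x^{α1} on [0,1]. Then w(0) = w(1) = 0 and there exists exactly one x₀ ∈ (0,1) with w(x₀) = 0, i.e. the equation x₀^{α1} + (1-x₀)^{α2} = 1 has a unique solution in (0,1). -/
/-!
Write `w x = (1 - (1 - x) ^ α2) - x ^ α1`. Near `0`, Bernoulli's inequality gives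
`w x ≥ α2 x - x ^ α1 > 0`, and near `1` it gives `w (1 - t) ≤ α1 t - t ^ α2 < 0`, so `w` has a zero
in `(0, 1)`. If it had two, then together with the zeros at `0` and `1`, Rolle's theorem would give
three zeros of `w'`. But `w' c = 0` means `(α1 - 1) log c + (1 - α2) log (1 - c) = log α2 - log α1`,
and the left-hand side is strictly concave, so it takes no value three times.
-/

open Real Set Filter Topology

theorem StrictConcaveOn.not_eq_of_lt_of_lt {f : ℝ → ℝ} {s : Set ℝ}
    (hf : StrictConcaveOn ℝ s f) {x y z : ℝ} (hx : x ∈ s) (hz : z ∈ s) (hxy : x < y)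
    (hyz : y < z) (hfx : f x = f y) : f z ≠ f y := by
  intro hfz
  have hy : y ∈ openSegment ℝ x z := by
    rw [openSegment_eq_Ioo (hxy.trans hyz)]
    exact ⟨hxy, hyz⟩
  have := hf.lt_on_openSegment hx hz (hxy.trans hyz).ne hy
  rw [hfx, hfz, min_self] at this
  exact this.false

theorem strictConcaveOn_mul_log_add_mul_log_one_sub {a b : ℝ} (ha : 0 < a) (hb : 0 < b) :
    StrictConcaveOn ℝ (Ioo 0 1) (fun c => a * log c + b * log (1 - c)) := by
  refine ⟨convex_Ioo 0 1, fun x hx y hy hxy s t hs ht hst => ?_⟩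
  have hlog := strictConcaveOn_log_Ioi.2 hx.1 hy.1 hxy hs ht hst
  have hlog_one_sub := strictConcaveOn_log_Ioi.2 (sub_pos.2 hx.2) (sub_pos.2 hy.2)
    (sub_right_injective.ne hxy) hs ht hst
  have hcomb : s • (1 - x) + t • (1 - y) = 1 - (s • x + t • y) := by
    simp only [smul_eq_mul]
    linear_combination hst
  rw [hcomb] at hlog_one_sub
  simp only [smul_eq_mul] at hlog hlog_one_sub ⊢
  linarith [mul_lt_mul_of_pos_left hlog ha, mul_lt_mul_of_pos_left hlog_one_sub hb]

theorem subsingleton_zeros_of_hasDerivAt {f f' : ℝ → ℝ} {a b : ℝ}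
    (hfc : ContinuousOn f (Icc a b)) (hf' : ∀ x ∈ Ioo a b, HasDerivAt f (f' x) x)
    (ha : f a = 0) (hb : f b = 0)
    (h3 : ∀ x y z, a < x → x < y → y < z → z < b → f' x = 0 → f' y = 0 → f' z = 0 → False) :
    {x ∈ Ioo a b | f x = 0}.Subsingleton := by
  have rolle : ∀ u v, a ≤ u → v ≤ b → u < v → f u = 0 → f v = 0 → ∃ c ∈ Ioo u v, f' c = 0 :=
    fun u v hau hvb huv hu hv =>
      exists_hasDerivAt_eq_zero huv (hfc.mono (Icc_subset_Icc hau hvb)) (hu.trans hv.symm)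
        fun x hx => hf' x ⟨hau.trans_lt hx.1, hx.2.trans_le hvb⟩
  suffices ∀ u v, u ∈ Ioo a b → v ∈ Ioo a b → u < v → f u = 0 → f v = 0 → False by
    rintro u ⟨hu, hfu⟩ v ⟨hv, hfv⟩
    by_contra hne
    rcases lt_or_gt_of_ne hne with huv | hvu
    · exact this u v hu hv huv hfu hfv
    · exact this v u hv hu hvu hfv hfu
  intro u v hu hv huv hfu hfv
  obtain ⟨c₁, hc₁, hf'c₁⟩ := rolle a u le_rfl hu.2.le hu.1 ha hfu
  obtain ⟨c₂, hc₂, hf'c₂⟩ := rolle u v hu.1.le hv.2.le huv hfu hfv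
  obtain ⟨c₃, hc₃, hf'c₃⟩ := rolle v b hv.1.le le_rfl hv.2 hfv hb
  exact h3 c₁ c₂ c₃ hc₁.1 (hc₁.2.trans hc₂.1) (hc₂.2.trans hc₃.1) hc₃.2 hf'c₁ hf'c₂ hf'c₃

theorem eventually_rpow_lt_mul {α c : ℝ} (hα : 1 < α) (hc : 0 < c) :
    ∀ᶠ x in 𝓝[>] 0, x ^ α < c * x := by
  have hlim : Tendsto (fun x : ℝ => x ^ (α - 1)) (𝓝[>] 0) (𝓝 0) := by
    simpa [zero_rpow (sub_pos.2 hα).ne'] using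
      (continuousAt_rpow_const 0 (α - 1) (Or.inr (sub_pos.2 hα).le)).tendsto.mono_left
        nhdsWithin_le_nhds
  filter_upwards [hlim.eventually (gt_mem_nhds hc), self_mem_nhdsWithin] with x hx hx₀
  rw [← sub_add_cancel α 1, rpow_add_one hx₀.ne']
  exact mul_lt_mul_of_pos_right hx hx₀

theorem eventually_mul_lt_rpow {α : ℝ} (hα : α < 1) (c : ℝ) :
    ∀ᶠ x in 𝓝[>] 0, c * x < x ^ α := by
  filter_upwards [(tendsto_rpow_neg_nhdsGT_zero (sub_neg.2 hα)).eventually_gt_atTop c,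
    self_mem_nhdsWithin] with x hx hx₀
  rw [← sub_add_cancel α 1, rpow_add_one hx₀.ne']
  exact mul_lt_mul_of_pos_right hx hx₀

noncomputable def powerGap (α1 α2 x : ℝ) : ℝ := (1 - (1 - x) ^ α2) - x ^ α1

section powerGap

variable {α1 α2 : ℝ}

theorem powerGap_zero (hα1 : α1 ≠ 0) : powerGap α1 α2 0 = 0 := by
  simp [powerGap, zero_rpow hα1]

theorem powerGap_one (hα2 : α2 ≠ 0) : powerGap α1 α2 1 = 0 := by
  simp [powerGap, zero_rpow hα2]

theorem continuous_powerGap (hα1 : 0 ≤ α1) (hα2 : 0 ≤ α2) : Continuous (powerGap α1 α2) :=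
  (continuous_const.sub ((continuous_rpow_const hα2).comp (continuous_const.sub continuous_id))).sub
    (continuous_rpow_const hα1)

theorem hasDerivAt_powerGap {x : ℝ} (hx : x ∈ Ioo 0 1) :
    HasDerivAt (powerGap α1 α2) (α2 * (1 - x) ^ (α2 - 1) - α1 * x ^ (α1 - 1)) x := by
  have h := ((hasDerivAt_id x).const_sub 1 |>.rpow_const (p := α2) (Or.inl (sub_pos.2 hx.2).ne')
    |>.const_sub 1).sub (hasDerivAt_rpow_const (p := α1) (Or.inl hx.1.ne'))
  exact h.congr_deriv (by simp only [id]; ring)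

theorem log_eq_of_powerGap_deriv_eq_zero (hα1 : 0 < α1) (hα2 : 0 < α2) {c : ℝ}
    (hc : c ∈ Ioo 0 1) (h : α2 * (1 - c) ^ (α2 - 1) - α1 * c ^ (α1 - 1) = 0) :
    (α1 - 1) * log c + (1 - α2) * log (1 - c) = log α2 - log α1 := by
  have hc₀ := hc.1
  have hc₁ := sub_pos.2 hc.2
  have hlog := congrArg log (sub_eq_zero.1 h)
  rw [log_mul hα2.ne' (rpow_pos_of_pos hc₁ _).ne', log_mul hα1.ne' (rpow_pos_of_pos hc₀ _).ne',
    log_rpow hc₁, log_rpow hc₀] at hlog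
  linarith

theorem eventually_powerGap_pos (hα1 : 1 < α1) (hα2 : 0 < α2) (hα2' : α2 ≤ 1) :
    ∀ᶠ x in 𝓝[>] 0, 0 < powerGap α1 α2 x := by
  filter_upwards [eventually_rpow_lt_mul hα1 hα2, Ioo_mem_nhdsGT one_pos] with x hx hx₁
  have hbernoulli : (1 - x) ^ α2 ≤ 1 + α2 * -x := by
    simpa only [sub_eq_add_neg] using
      rpow_one_add_le_one_add_mul_self (by linarith [hx₁.2]) hα2.le hα2'
  unfold powerGap
  linarith

theorem eventually_powerGap_one_sub_neg (hα1 : 1 ≤ α1) (hα2 : α2 < 1) :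
    ∀ᶠ t in 𝓝[>] 0, powerGap α1 α2 (1 - t) < 0 := by
  filter_upwards [eventually_mul_lt_rpow hα2 α1, Ioo_mem_nhdsGT one_pos] with t ht ht₁
  have hbernoulli : 1 + α1 * -t ≤ (1 - t) ^ α1 := by
    simpa only [sub_eq_add_neg] using one_add_mul_self_le_rpow_one_add (by linarith [ht₁.2]) hα1
  simp only [powerGap, sub_sub_cancel]
  linarith

theorem exists_powerGap_eq_zero (hα1 : 1 < α1) (hα2 : 0 < α2) (hα2' : α2 < 1) :
    ∃ x ∈ Ioo 0 1, powerGap α1 α2 x = 0 := by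
  obtain ⟨t, ⟨hpos, hneg⟩, ht⟩ := ((eventually_powerGap_pos hα1 hα2 hα2'.le).and
    (eventually_powerGap_one_sub_neg hα1.le hα2')).and
    (Ioo_mem_nhdsGT (by norm_num : (0 : ℝ) < 1 / 2)) |>.exists
  obtain ⟨x, hx, hx0⟩ := intermediate_value_Icc' (by linarith [ht.2] : t ≤ 1 - t)
    (continuous_powerGap (by linarith) hα2.le).continuousOn ⟨hneg.le, hpos.le⟩
  exact ⟨x, ⟨ht.1.trans_le hx.1, by linarith [hx.2, ht.1]⟩, hx0⟩

theorem not_three_zeros_powerGap_deriv (hα1 : 1 < α1) (hα2 : 0 < α2) (hα2' : α2 < 1)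
    {x y z : ℝ} (h0x : 0 < x) (hxy : x < y) (hyz : y < z) (hz1 : z < 1)
    (hx : α2 * (1 - x) ^ (α2 - 1) - α1 * x ^ (α1 - 1) = 0)
    (hy : α2 * (1 - y) ^ (α2 - 1) - α1 * y ^ (α1 - 1) = 0)
    (hz : α2 * (1 - z) ^ (α2 - 1) - α1 * z ^ (α1 - 1) = 0) : False := by
  have hx' : x ∈ Ioo 0 1 := ⟨h0x, by linarith⟩
  have hy' : y ∈ Ioo 0 1 := ⟨by linarith, by linarith⟩
  have hz' : z ∈ Ioo 0 1 := ⟨by linarith, hz1⟩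
  have hα1₀ : 0 < α1 := by linarith
  refine (strictConcaveOn_mul_log_add_mul_log_one_sub (sub_pos.2 hα1) (sub_pos.2 hα2')
    |>.not_eq_of_lt_of_lt hx' hz' hxy hyz ?_) ?_
  · exact (log_eq_of_powerGap_deriv_eq_zero hα1₀ hα2 hx' hx).trans
      (log_eq_of_powerGap_deriv_eq_zero hα1₀ hα2 hy' hy).symm
  · exact (log_eq_of_powerGap_deriv_eq_zero hα1₀ hα2 hz' hz).trans
      (log_eq_of_powerGap_deriv_eq_zero hα1₀ hα2 hy' hy).symm

end powerGap

theorem stmt_7 (p α1 α2 : ℝ) (hp : 1 < p) (hα2 : 1 - 1/p < α2) (hα2' : α2 < 1)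
    (hα1 : 1 < α1) :
    (1 - (1 - (0:ℝ)) ^ α2) - (0:ℝ) ^ α1 = 0 ∧
    (1 - (1 - (1:ℝ)) ^ α2) - (1:ℝ) ^ α1 = 0 ∧
    ∃! x₀ : ℝ, x₀ ∈ Set.Ioo (0:ℝ) 1 ∧ x₀ ^ α1 + (1 - x₀) ^ α2 = 1 := by
  have hα2₀ : 0 < α2 := (sub_pos.2 ((div_lt_one (zero_lt_one.trans hp)).2 hp)).trans hα2
  have hα1₀ : 0 < α1 := zero_lt_one.trans hα1
  have hgap : ∀ x, x ^ α1 + (1 - x) ^ α2 = 1 ↔ powerGap α1 α2 x = 0 := fun x => by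
    unfold powerGap
    constructor <;> intro h <;> linarith
  refine ⟨powerGap_zero hα1₀.ne', powerGap_one hα2₀.ne', ?_⟩
  simp only [hgap]
  obtain ⟨x, hx, hx0⟩ := exists_powerGap_eq_zero hα1 hα2₀ hα2'
  have huniq := subsingleton_zeros_of_hasDerivAt
    (continuous_powerGap hα1₀.le hα2₀.le).continuousOn (fun _ => hasDerivAt_powerGap)
    (powerGap_zero hα1₀.ne') (powerGap_one hα2₀.ne')
    fun _ _ _ => not_three_zeros_powerGap_deriv hα1 hα2₀ hα2'
  exact ⟨x, ⟨hx, hx0⟩, fun y hy => huniq hy ⟨hx, hx0⟩⟩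
end

section
/- Let p = 2. Define u1(x) = (2/3)x for 0 ≤ x ≤ 1/2 and u1(x) = (4/3)x - 1/3 for 1/2 ≤ x ≤ 1; define u2(x) = (5/6)x for 0 ≤ x ≤ 4/5 and u2(x) = (5/3)x - 2/3 for 4/5 ≤ x ≤ 1. Let u = min(u1, u2). Then ∫₀¹ (u'(x))² dx = 7/6, while the linear function v(x) = x with the same boundary values has ∫₀¹ (v')² dx = 1. In particular u is not a Q-quasisuperminimizer in (0,1) for any Q < 7/6. -/
/-!
On the open intervals between the breakpoints `0 < 1/2 < 2/3 < 4/5 < 1` the function `u` is affine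
with slopes `2/3, 4/3, 5/6, 5/3`, so its energy is
`1/2 · 4/9 + 1/6 · 16/9 + 2/15 · 25/36 + 1/5 · 25/9 = 7/6`; the corners, where `deriv` takes a junk
value, form a null set.
-/

open MeasureTheory Set

section AffineOnIoo

variable {E : Type*} [NormedAddCommGroup E] {u : ℝ → ℝ} {a b m c : ℝ}

theorem deriv_eq_of_eqOn_Ioo (h : EqOn u (fun x => m * x + c) (Ioo a b)) {x : ℝ}
    (hx : x ∈ Ioo a b) : deriv u x = m := by
  have hloc : u =ᶠ[nhds x] fun x => m * x + c :=
    Filter.eventuallyEq_of_mem (isOpen_Ioo.mem_nhds hx) h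
  rw [hloc.deriv_eq]
  simp

theorem intervalIntegrable_comp_deriv_of_eqOn_Ioo (F : ℝ → E) (hab : a ≤ b)
    (h : EqOn u (fun x => m * x + c) (Ioo a b)) :
    IntervalIntegrable (fun x => F (deriv u x)) volume a b :=
  intervalIntegrable_const.congr_uIoo fun x hx => by
    rw [deriv_eq_of_eqOn_Ioo h (uIoo_of_le hab ▸ hx)]

theorem integral_comp_deriv_of_eqOn_Ioo [NormedSpace ℝ E] [CompleteSpace E] (F : ℝ → E)
    (hab : a ≤ b) (h : EqOn u (fun x => m * x + c) (Ioo a b)) :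
    ∫ x in a..b, F (deriv u x) = (b - a) • F m := by
  rw [intervalIntegral.integral_congr_Ioo_of_le hab (g := fun _ => F m)
    fun x hx => by rw [deriv_eq_of_eqOn_Ioo h hx], intervalIntegral.integral_const]

end AffineOnIoo

theorem integral_deriv_sq_min_max :
    ∫ x in (0:ℝ)..1,
      deriv (fun x => min (max (2/3 * x) (4/3 * x - 1/3)) (max (5/6 * x) (5/3 * x - 2/3))) x ^ 2
      = 7/6 := by
  set u := fun x : ℝ => min (max (2/3 * x) (4/3 * x - 1/3)) (max (5/6 * x) (5/3 * x - 2/3))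
  have piece {a b m c : ℝ} (hab : a ≤ b) (h : EqOn u (fun x => m * x + c) (Ioo a b)) :=
    And.intro (intervalIntegrable_comp_deriv_of_eqOn_Ioo (· ^ 2) hab h)
      (integral_comp_deriv_of_eqOn_Ioo (· ^ 2) hab h)
  have h1 : EqOn u (fun x => 2/3 * x + 0) (Ioo 0 (1/2)) := fun x hx => by
    simp only [u, max_def, min_def]; split_ifs <;> linarith [hx.1, hx.2]
  have h2 : EqOn u (fun x => 4/3 * x + -1/3) (Ioo (1/2) (2/3)) := fun x hx => by
    simp only [u, max_def, min_def]; split_ifs <;> linarith [hx.1, hx.2]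
  have h3 : EqOn u (fun x => 5/6 * x + 0) (Ioo (2/3) (4/5)) := fun x hx => by
    simp only [u, max_def, min_def]; split_ifs <;> linarith [hx.1, hx.2]
  have h4 : EqOn u (fun x => 5/3 * x + -2/3) (Ioo (4/5) 1) := fun x hx => by
    simp only [u, max_def, min_def]; split_ifs <;> linarith [hx.1, hx.2]
  obtain ⟨i1, e1⟩ := piece (by norm_num) h1
  obtain ⟨i2, e2⟩ := piece (by norm_num) h2
  obtain ⟨i3, e3⟩ := piece (by norm_num) h3
  obtain ⟨i4, e4⟩ := piece (by norm_num) h4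
  rw [← intervalIntegral.integral_add_adjacent_intervals (i1.trans i2) (i3.trans i4),
    ← intervalIntegral.integral_add_adjacent_intervals i1 i2,
    ← intervalIntegral.integral_add_adjacent_intervals i3 i4, e1, e2, e3, e4]
  norm_num

theorem stmt_8
    (u1 u2 u : ℝ → ℝ)
    (hu1 : ∀ x, u1 x = max ((2/3) * x) ((4/3) * x - 1/3))
    (hu2 : ∀ x, u2 x = max ((5/6) * x) ((5/3) * x - 2/3))
    (hu : ∀ x, u x = min (u1 x) (u2 x)) :
    (∫ x in (0:ℝ)..1, (deriv u x) ^ 2) = 7/6 ∧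
    (∫ x in (0:ℝ)..1, (deriv (fun y : ℝ => y) x) ^ 2) = 1 ∧
    ∀ Q : ℝ, Q < 7/6 →
      ¬ ((∫ x in (0:ℝ)..1, (deriv u x) ^ 2) ≤
          Q * ∫ x in (0:ℝ)..1, (deriv (fun y : ℝ => y) x) ^ 2) := by
  have hu_eq : u = fun x => min (max (2/3 * x) (4/3 * x - 1/3)) (max (5/6 * x) (5/3 * x - 2/3)) :=
    funext fun x => by rw [hu, hu1, hu2]
  have energy_u : ∫ x in (0:ℝ)..1, deriv u x ^ 2 = 7/6 := hu_eq ▸ integral_deriv_sq_min_max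
  have energy_id : ∫ x in (0:ℝ)..1, deriv (fun y : ℝ => y) x ^ 2 = 1 := by simp
  refine ⟨energy_u, energy_id, fun Q hQ hle => ?_⟩
  rw [energy_u, energy_id, mul_one] at hle
  linarith
end

section
/- For γ > 1 and p > 1, let k = (p γ^p (γ-1) - γ(γ^p - 1)) / (γ^p - 1 - p(γ-1)) and Q = (γ^p + k)(1+k)^{p-1}/(γ+k)^p. Then Q = (p-1)^{p-1} (γ^p - 1)^p / (p^p (γ^p - γ)^{p-1} (γ - 1)). -/
theorem stmt_9 (p γ : ℝ) (hp : 1 < p) (hγ : 1 < γ)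
    (k Q : ℝ)
    (hk : k = (p * γ ^ p * (γ - 1) - γ * (γ ^ p - 1)) / (γ ^ p - 1 - p * (γ - 1)))
    (hQ : Q = (γ ^ p + k) * (1 + k) ^ (p - 1) / (γ + k) ^ p) :
    Q = (p - 1) ^ (p - 1) * (γ ^ p - 1) ^ p /
        (p ^ p * (γ ^ p - γ) ^ (p - 1) * (γ - 1)) := by
  have hγ0 : (0:ℝ) < γ := by linarith
  have hc : (0:ℝ) < γ - 1 := by linarith
  have hp0 : (0:ℝ) < p := by linarith
  have hp1 : (0:ℝ) < p - 1 := by linarith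
  have hγp : γ < γ ^ p := by
    nth_rewrite 1 [← Real.rpow_one γ]
    exact (Real.rpow_lt_rpow_left_iff hγ).mpr hp
  have hA : (0:ℝ) < γ ^ p - 1 := by linarith
  have hB : (0:ℝ) < γ ^ p - γ := by linarith
  have hD : (0:ℝ) < γ ^ p - 1 - p * (γ - 1) := by
    have h := one_add_mul_self_lt_rpow_one_add (s := γ - 1) (by linarith)
      (by positivity) hp
    have h' : (1 + (γ - 1)) = γ := by ring
    rw [h'] at h
    linarith
  have hDne : (γ ^ p - 1 - p * (γ - 1)) ≠ 0 := ne_of_gt hD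
  have h1 : γ ^ p + k = (γ ^ p - 1) * (γ ^ p - γ) / (γ ^ p - 1 - p * (γ - 1)) := by
    rw [hk]; field_simp; ring
  have h2 : 1 + k = (p - 1) * ((γ - 1) * (γ ^ p - 1)) / (γ ^ p - 1 - p * (γ - 1)) := by
    rw [hk]; field_simp; ring
  have h3 : γ + k = p * ((γ - 1) * (γ ^ p - γ)) / (γ ^ p - 1 - p * (γ - 1)) := by
    rw [hk]; field_simp; ring
  rw [hQ, h1, h2, h3]
  rw [Real.div_rpow (by positivity) (le_of_lt hD),
      Real.div_rpow (by positivity) (le_of_lt hD),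
      Real.mul_rpow (by positivity) (by positivity),
      Real.mul_rpow (by positivity) (by positivity),
      Real.mul_rpow (by positivity) (by positivity),
      Real.mul_rpow (by positivity) (by positivity)]
  have splitA : (γ ^ p - 1) ^ p = (γ ^ p - 1) * (γ ^ p - 1) ^ (p - 1) := by
    rw [← Real.rpow_one_add' (le_of_lt hA) (by linarith)]
    norm_num
  have splitB : (γ ^ p - γ) ^ p = (γ ^ p - γ) * (γ ^ p - γ) ^ (p - 1) := by
    rw [← Real.rpow_one_add' (le_of_lt hB) (by linarith)]
    norm_num
  have splitC : (γ - 1) ^ p = (γ - 1) * (γ - 1) ^ (p - 1) := by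
    rw [← Real.rpow_one_add' (le_of_lt hc) (by linarith)]
    norm_num
  have splitD : (γ ^ p - 1 - p * (γ - 1)) ^ p
      = (γ ^ p - 1 - p * (γ - 1)) * (γ ^ p - 1 - p * (γ - 1)) ^ (p - 1) := by
    rw [← Real.rpow_one_add' (le_of_lt hD) (by linarith)]
    norm_num
  rw [splitA, splitB, splitC, splitD]
  have pA := Real.rpow_pos_of_pos hA (p - 1)
  have pB := Real.rpow_pos_of_pos hB (p - 1)
  have pC := Real.rpow_pos_of_pos hc (p - 1)
  have pD := Real.rpow_pos_of_pos hD (p - 1)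
  have pP := Real.rpow_pos_of_pos hp0 p
  have pP1 := Real.rpow_pos_of_pos hp1 (p - 1)
  field_simp
end

section
/- For γ > 1 and p > 1, let k = (p γ^p (γ-1) - γ(γ^p - 1)) / (γ^p - 1 - p(γ-1)) and Q = (γ^p + k)(1+k)^{p-1}/(γ+k)^p. Then Q ≤ γ^{p-1}. -/
/-!
For every `k ≥ 0` one has `(γ^p + k)(1 + k)^(p-1) ≤ γ^(p-1) (γ + k)^p`: writing
`γ^p + k = γ^(p-1) (γ + k γ^(1-p))`, weighted AM-GM with weights `1/p` and `(p-1)/p` bounds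
`(γ + k γ^(1-p)) (1 + k)^(p-1)` by the `p`-th power of a mean that is at most `γ + k`.
The given `k` is nonnegative because numerator and denominator are both Bernoulli-type
differences, the numerator being Bernoulli's inequality applied at `γ⁻¹`.
-/

open Real

lemma mul_sub_one_le_rpow_sub_one {γ p : ℝ} (hγ : 0 ≤ γ) (hp : 1 ≤ p) :
    p * (γ - 1) ≤ γ ^ p - 1 := by
  have h := one_add_mul_self_le_rpow_one_add (s := γ - 1) (by linarith) hp
  rw [add_sub_cancel] at h
  linarith

lemma mul_rpow_sub_one_le_rpow_sub_one_mul {γ p : ℝ} (hγ : 0 < γ) (hp : 1 ≤ p) :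
    γ * (γ ^ p - 1) ≤ p * γ ^ p * (γ - 1) := by
  have h := mul_sub_one_le_rpow_sub_one (inv_nonneg.mpr hγ.le) hp
  rw [inv_rpow hγ.le] at h
  have hγp : 0 < γ ^ p := rpow_pos_of_pos hγ p
  have h' := mul_le_mul_of_nonneg_left h (mul_pos hγ hγp).le
  field_simp at h'
  linarith

lemma mul_rpow_sub_one_le_mean_rpow {A B p : ℝ} (hA : 0 ≤ A) (hB : 0 ≤ B) (hp : 1 ≤ p) :
    A * B ^ (p - 1) ≤ ((A + (p - 1) * B) / p) ^ p := by
  have hp0 : 0 < p := by linarith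
  have hgm := geom_mean_le_arith_mean2_weighted (one_div_nonneg.mpr hp0.le)
    (div_nonneg (sub_nonneg.mpr hp) hp0.le) hA hB (by field_simp; ring)
  have hpow := rpow_le_rpow (by positivity) hgm hp0.le
  rwa [mul_rpow (rpow_nonneg hA _) (rpow_nonneg hB _), ← rpow_mul hA, ← rpow_mul hB,
    one_div_mul_cancel hp0.ne', div_mul_cancel₀ _ hp0.ne', rpow_one,
    show 1 / p * A + (p - 1) / p * B = (A + (p - 1) * B) / p by field_simp] at hpow

lemma rpow_add_mul_one_add_rpow_le {γ p k : ℝ} (hγ : 1 ≤ γ) (hp : 1 ≤ p) (hk : 0 ≤ k) :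
    (γ ^ p + k) * (1 + k) ^ (p - 1) ≤ γ ^ (p - 1) * (γ + k) ^ p := by
  have hγ0 : 0 < γ := by linarith
  set A := γ + k * γ ^ (1 - p)
  have hsplit : γ ^ p + k = γ ^ (p - 1) * A := by
    have e1 : γ ^ (p - 1) * γ = γ ^ p := by
      rw [← rpow_add_one hγ0.ne']; ring_nf
    have e2 : γ ^ (p - 1) * γ ^ (1 - p) = 1 := by
      rw [← rpow_add hγ0]; norm_num
    linear_combination -e1 - k * e2
  have hγ1p : γ ^ (1 - p) ≤ 1 := rpow_le_one_of_one_le_of_nonpos hγ (by linarith)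
  have hmean : (A + (p - 1) * (1 + k)) / p ≤ γ + k := by
    rw [div_le_iff₀ (by linarith)]
    nlinarith [mul_le_mul_of_nonneg_left hγ1p hk]
  calc (γ ^ p + k) * (1 + k) ^ (p - 1)
      = γ ^ (p - 1) * (A * (1 + k) ^ (p - 1)) := by rw [hsplit, mul_assoc]
    _ ≤ γ ^ (p - 1) * ((A + (p - 1) * (1 + k)) / p) ^ p := by
        gcongr
        exact mul_rpow_sub_one_le_mean_rpow (by positivity) (by linarith) hp
    _ ≤ γ ^ (p - 1) * (γ + k) ^ p := by gcongr

theorem stmt_10 (p γ : ℝ) (hp : 1 < p) (hγ : 1 < γ)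
    (k Q : ℝ)
    (hk : k = (p * γ ^ p * (γ - 1) - γ * (γ ^ p - 1)) / (γ ^ p - 1 - p * (γ - 1)))
    (hQ : Q = (γ ^ p + k) * (1 + k) ^ (p - 1) / (γ + k) ^ p) :
    Q ≤ γ ^ (p - 1) := by
  have hk0 : 0 ≤ k := hk ▸ div_nonneg
    (sub_nonneg.mpr (mul_rpow_sub_one_le_rpow_sub_one_mul (by linarith) hp.le))
    (by linarith [mul_sub_one_le_rpow_sub_one (γ := γ) (by linarith) hp.le])
  rw [hQ, div_le_iff₀ (rpow_pos_of_pos (by linarith) p)]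
  exact rpow_add_mul_one_add_rpow_le hγ.le hp.le hk0
end
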